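/- Let G be a chordal graph on n vertices with list chromatic number s and let t be a positive integer with t < s. Then for every assignment L of t-element colour lists to the vertices of G, there exists an induced subgraph of G on at least tn/s vertices that is L-list colourable. -/

import Mathlib

/-- `G` is `L`-list colourable. -/
def ListColourable {V : Type*} (G : SimpleGraph V) (L : V → Finset ℕ) : Prop :=
  ∃ c : V → ℕ, (∀ v, c v ∈ L v) ∧ ∀ u v, G.Adj u v → c u ≠ c v

/-- `G` is `k`-choosable. -/
def Choosable {V : Type*} (G : SimpleGraph V) (k : ℕ) : Prop :=
  ∀ L : V → Finset ℕ, (∀ v, (L v).card = k) → ListColourable G L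

/-- The list chromatic number of `G`. -/
noncomputable def listChromaticNumber {V : Type*} (G : SimpleGraph V) : ℕ :=
  sInf {k | Choosable G k}

/-- `G` is chordal: it has no induced cycle of length greater than 3. -/
def IsChordal {V : Type*} (G : SimpleGraph V) : Prop :=
  ∀ n : ℕ, 4 ≤ n → IsEmpty (SimpleGraph.cycleGraph n ↪g G)

/-!
Take a proper `s`-colouring of `G` (it exists since `G` is `s`-choosable). Some `t` of its `s`
colour classes together cover at least `tn/s` vertices; let `S` be their union. Every clique of
`G[S]` meets each colour class at most once, so has at most `t` vertices, and a chordal graph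
whose cliques have at most `t` vertices is `t`-choosable: repeatedly remove a simplicial vertex;
its neighbours coloured before it form a clique with fewer than `t` vertices, so a colour of its
list remains free.

Simplicial vertices exist by Dirac's argument. If `A` is not a clique, pick non-adjacent `a`, `b`
and let `C` be the component of `a` in `A` minus the closed neighbourhood of `b`. The vertices of
`A` outside `C` with a neighbour in `C` are neighbours of `b`, and they form a clique: two
non-adjacent ones, joined by a shortest path through `C` and closed up through `b`, would give an
induced cycle of length at least four. A simplicial vertex of `C` together with this boundary,
found by induction and chosen off the boundary, is simplicial in `A`.
-/

open Finset

namespace SimpleGraph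

variable {V : Type*} {G : SimpleGraph V}

lemma cycleGraph_adj_zero_succ {k : ℕ} (i : Fin (k + 1)) :
    (cycleGraph (k + 2)).Adj 0 i.succ ↔ i = 0 ∨ i = Fin.last k := by
  grind [cycleGraph_adj', Fin.coe_sub_iff_le, Fin.coe_sub_iff_lt]

lemma cycleGraph_adj_succ_succ {k : ℕ} (i j : Fin (k + 1)) :
    (cycleGraph (k + 2)).Adj i.succ j.succ ↔ (pathGraph (k + 1)).Adj i j := by
  grind [cycleGraph_adj', pathGraph_adj, Fin.coe_sub_iff_le, Fin.coe_sub_iff_lt]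

def Embedding.cycleGraphOfPathGraph {k : ℕ} (g : pathGraph (k + 1) ↪g G) (b : V)
    (hb : b ∉ Set.range g) (hbg : ∀ i, G.Adj b (g i) ↔ i = 0 ∨ i = Fin.last k) :
    cycleGraph (k + 2) ↪g G where
  toFun := Fin.cons b g
  inj' := Fin.cons_injective_iff.mpr ⟨hb, g.injective⟩
  map_rel_iff' {i j} := by
    induction i using Fin.cases <;> induction j using Fin.cases
    · simp
    · simp [hbg, cycleGraph_adj_zero_succ]
    · simp [G.adj_comm _ b, hbg, (cycleGraph _).adj_comm _ 0, cycleGraph_adj_zero_succ]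
    · simp [cycleGraph_adj_succ_succ]

namespace Walk

lemma not_adj_getVert_of_length_eq_dist {u v : V} {p : G.Walk u v} (hp : p.length = G.dist u v)
    {i j : ℕ} (hij : i + 1 < j) (hj : j ≤ p.length) : ¬G.Adj (p.getVert i) (p.getVert j) := by
  intro h
  have := G.dist_le ((p.take i).append (cons h (p.drop j)))
  simp only [length_append, take_length, length_cons, drop_length] at this
  omega

def pathGraphEmbedding {u v : V} (p : G.Walk u v) (hp : p.length = G.dist u v) :
    pathGraph (p.length + 1) ↪g G where
  toFun i := p.getVert i
  inj' i j h := Fin.ext <| (p.isPath_of_length_eq_dist hp).getVert_injOn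
    (Nat.lt_succ_iff.mp i.isLt) (Nat.lt_succ_iff.mp j.isLt) h
  map_rel_iff' {i j} := by
    change G.Adj (p.getVert i) (p.getVert j) ↔ _
    rw [pathGraph_adj]
    have hi := i.isLt
    have hj := j.isLt
    refine ⟨fun h => ?_, ?_⟩
    · rcases lt_trichotomy (i : ℕ) j with hij | hij | hij
      · by_contra
        exact not_adj_getVert_of_length_eq_dist hp (by omega) (by omega) h
      · exact absurd h (by rw [hij]; exact G.irrefl)
      · by_contra
        exact not_adj_getVert_of_length_eq_dist hp (by omega) (by omega) h.symm
    · rintro (h | h)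
      · exact h ▸ p.adj_getVert_succ (by omega)
      · exact (h ▸ p.adj_getVert_succ (by omega)).symm

end Walk

theorem _root_.IsChordal.adj_of_reachable_avoiding_neighbors (hG : IsChordal G) {b x y : V}
    (hbx : G.Adj b x) (hby : G.Adj b y) (hxy : x ≠ y) {s : Set V}
    (hs : ∀ z ∈ s, z ≠ b ∧ ¬G.Adj b z) {c₁ c₂ : s} (hx : G.Adj x c₁) (hy : G.Adj c₂ y)
    (hc : (G.induce s).Reachable c₁ c₂) : G.Adj x y := by
  by_contra hnxy
  set T : Set V := insert x (insert y s)
  have hsT : s ⊆ T := (Set.subset_insert _ _).trans (Set.subset_insert _ _)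
  let x' : T := ⟨x, by simp [T]⟩
  let y' : T := ⟨y, by simp [T]⟩
  have hreach : (G.induce T).Reachable x' y' :=
    ((Adj.reachable (v := ⟨c₁, hsT c₁.2⟩) hx).trans (hc.map (G.induceHomOfLE hsT).toHom)).trans
      (show (G.induce T).Adj ⟨c₂, hsT c₂.2⟩ y' from hy).reachable
  -- A shortest `x`-`y` walk in `G[T]` is an induced path, and `b` closes it into an induced cycle.
  obtain ⟨r, hr⟩ := hreach.exists_walk_length_eq_dist
  have hlen : 1 < r.length := hr ▸ hreach.one_lt_dist_of_ne_of_not_adj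
    (fun h => hxy (congrArg Subtype.val h)) hnxy
  have hpath := r.isPath_of_length_eq_dist hr
  let g := (Embedding.induce T).comp (r.pathGraphEmbedding hr)
  have hb : b ∉ Set.range g := by
    rintro ⟨i, hi⟩
    have hmem : (r.getVert i : V) ∈ T := (r.getVert i).2
    change (r.getVert i : V) = b at hi
    rw [hi] at hmem
    rcases hmem with h | h | h
    · exact G.irrefl (h ▸ hbx)
    · exact G.irrefl (h ▸ hby)
    · exact (hs b h).1 rfl
  refine (hG (r.length + 2) (by omega)).false
    (g.cycleGraphOfPathGraph b hb fun i => ⟨fun hadj => ?_, ?_⟩)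
  · by_contra hi
    push Not at hi
    have hi' : (i : ℕ) ≤ r.length := Nat.lt_succ_iff.mp i.isLt
    rcases (r.getVert i).2 with h | h | h
    · exact hi.1 (Fin.ext ((hpath.getVert_eq_start_iff hi').mp (Subtype.ext h)))
    · exact hi.2 (Fin.ext ((hpath.getVert_eq_end_iff hi').mp (Subtype.ext h)))
    · exact (hs _ h).2 hadj
  · rintro (rfl | rfl)
    · change G.Adj b (r.getVert 0 : V)
      simpa using hbx
    · change G.Adj b (r.getVert r.length : V)
      simpa using hby

theorem exists_not_adj_of_not_isClique {A K : Set V} (hK : G.IsClique K) (hA : ¬G.IsClique A) :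
    ∃ b ∈ A, ∃ a ∈ A, a ≠ b ∧ ¬G.Adj b a ∧ ∀ z ∈ A ∩ K, z = b ∨ G.Adj b z := by
  by_cases h : ∃ b ∈ A ∩ K, ∃ a ∈ A, a ≠ b ∧ ¬G.Adj b a
  · obtain ⟨b, ⟨hbA, hbK⟩, a, haA, hab, hba⟩ := h
    exact ⟨b, hbA, a, haA, hab, hba, fun z hz => or_iff_not_imp_left.mpr fun hzb =>
      hK hbK hz.2 (Ne.symm hzb)⟩
  · push Not at h
    obtain ⟨b, hbA, a, haA, hba, hnadj⟩ : ∃ b ∈ A, ∃ a ∈ A, b ≠ a ∧ ¬G.Adj b a := by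
      simpa [IsClique, Set.Pairwise] using hA
    exact ⟨b, hbA, a, haA, hba.symm, hnadj, fun z hz => or_iff_not_imp_left.mpr fun hzb =>
      (h z hz b hbA (Ne.symm hzb)).symm⟩

/-- The clique `K` to be avoided is what lets the induction pick its vertex off the separator. -/
theorem _root_.IsChordal.exists_isClique_inter_neighborSet (hG : IsChordal G) (A : Finset V)
    {K : Set V} (hK : G.IsClique K) (hAK : ¬(↑A ⊆ K)) :
    ∃ v ∈ A, v ∉ K ∧ G.IsClique (↑A ∩ G.neighborSet v) := by
  classical
  induction A using Finset.strongInduction generalizing K with | H A ih =>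
  by_cases hA : G.IsClique (A : Set V)
  · obtain ⟨v, hvA, hvK⟩ := Set.not_subset.mp hAK
    exact ⟨v, hvA, hvK, hA.subset Set.inter_subset_left⟩
  obtain ⟨b, hbA, a, haA, hab, hba, hKb⟩ := exists_not_adj_of_not_isClique hK hA
  set D : Set V := {z | z ∈ A ∧ z ≠ b ∧ ¬G.Adj b z}
  have haD : a ∈ D := ⟨haA, hab, hba⟩
  set C : Set V := {z | ∃ hz : z ∈ D, (G.induce D).Reachable ⟨a, haD⟩ ⟨z, hz⟩}
  have haC : a ∈ C := ⟨haD, Reachable.refl _⟩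
  have hCD : C ⊆ D := fun z ⟨hz, _⟩ => hz
  have hC_closed : ∀ c ∈ C, ∀ z ∈ D, G.Adj c z → z ∈ C := by
    rintro c ⟨hcD, hc⟩ z hzD hcz
    exact ⟨hzD, hc.trans (show (G.induce D).Adj ⟨c, hcD⟩ ⟨z, hzD⟩ from hcz).reachable⟩
  set S : Set V := {z | z ∈ A ∧ z ∉ C ∧ ∃ c ∈ C, G.Adj z c}
  have hSb : ∀ z ∈ S, G.Adj b z := by
    rintro z ⟨hzA, hzC, c, hcC, hzc⟩
    by_contra hbz
    have hzb : z ≠ b := by rintro rfl; exact (hCD hcC).2.2 hzc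
    exact hzC (hC_closed c hcC z ⟨hzA, hzb, hbz⟩ hzc.symm)
  have hS : G.IsClique S := by
    intro x hx y hy hxy
    obtain ⟨c₁, ⟨hc₁D, h₁⟩, hxc₁⟩ := hx.2.2
    obtain ⟨c₂, ⟨hc₂D, h₂⟩, hyc₂⟩ := hy.2.2
    exact hG.adj_of_reachable_avoiding_neighbors (hSb x hx) (hSb y hy) hxy (fun z hz => hz.2)
      (c₁ := ⟨c₁, hc₁D⟩) (c₂ := ⟨c₂, hc₂D⟩) hxc₁ hyc₂.symm (h₁.symm.trans h₂)
  set A' := A.filter (fun z => z ∈ C ∨ z ∈ S)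
  have hA'A : A' ⊂ A := by
    refine filter_ssubset.mpr ⟨b, hbA, ?_⟩
    rintro (h | h)
    · exact (hCD h).2.1 rfl
    · exact G.irrefl (hSb b h)
  obtain ⟨v, hvA', hvS, hv⟩ := ih A' hA'A hS fun h =>
    (h (mem_filter.mpr ⟨haA, Or.inl haC⟩)).2.1 haC
  have hvC : v ∈ C := (mem_filter.mp hvA').2.resolve_right hvS
  refine ⟨v, hA'A.subset hvA', fun hvK => ?_, hv.subset ?_⟩
  · rcases hKb v ⟨hA'A.subset hvA', hvK⟩ with h | h
    · exact (hCD hvC).2.1 h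
    · exact (hCD hvC).2.2 h
  · rintro z ⟨hzA, hvz⟩
    refine ⟨mem_filter.mpr ⟨hzA, ?_⟩, hvz⟩
    by_cases hzC : z ∈ C
    · exact Or.inl hzC
    · exact Or.inr ⟨hzA, hzC, v, hvC, hvz.symm⟩

end SimpleGraph

def IsListColouringOn {V : Type*} (G : SimpleGraph V) (L : V → Finset ℕ) (A : Finset V)
    (c : V → ℕ) : Prop :=
  (∀ v ∈ A, c v ∈ L v) ∧ ∀ u ∈ A, ∀ v ∈ A, G.Adj u v → c u ≠ c v

theorem IsListColouringOn.exists_insert {V : Type*} [DecidableEq V] {G : SimpleGraph V}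
    [DecidableRel G.Adj] {L : V → Finset ℕ} {A : Finset V} {c : V → ℕ}
    (hc : IsListColouringOn G L A c) {v : V} (hv : #{u ∈ A | G.Adj v u} < #(L v)) :
    ∃ c', IsListColouringOn G L (insert v A) c' := by
  obtain ⟨α, hαL, hα⟩ := exists_mem_notMem_of_card_lt_card (card_image_le.trans_lt hv)
  have hfree : ∀ u ∈ A, G.Adj v u → α ≠ c u := fun u hu hvu h =>
    hα (mem_image.mpr ⟨u, mem_filter.mpr ⟨hu, hvu⟩, h.symm⟩)
  have hmem : ∀ u ∈ insert v A, u ≠ v → u ∈ A := fun u hu huv =>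
    (mem_insert.mp hu).resolve_left huv
  refine ⟨Function.update c v α, fun u hu => ?_, fun u hu w hw huw => ?_⟩
  · rcases eq_or_ne u v with rfl | huv
    · simpa using hαL
    · simpa [huv] using hc.1 u (hmem u hu huv)
  by_cases huv : u = v <;> by_cases hwv : w = v
  · subst huv hwv
    exact absurd huw G.irrefl
  · subst huv
    simpa [hwv] using hfree w (hmem w hw hwv) huw
  · subst hwv
    simpa [huv] using (hfree u (hmem u hu huv) huw.symm).symm
  · simpa [huv, hwv] using hc.2 u (hmem u hu huv) w (hmem w hw hwv) huw

theorem IsChordal.exists_isListColouringOn {V : Type*} {G : SimpleGraph V} (hG : IsChordal G)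
    {t : ℕ} (A : Finset V) (hA : ∀ B ⊆ A, G.IsClique (B : Set V) → #B ≤ t) (L : V → Finset ℕ)
    (hL : ∀ v ∈ A, t ≤ #(L v)) : ∃ c, IsListColouringOn G L A c := by
  classical
  induction A using Finset.strongInduction with | H A ih =>
  rcases A.eq_empty_or_nonempty with rfl | ⟨a, ha⟩
  · exact ⟨0, by simp [IsListColouringOn]⟩
  obtain ⟨v, hvA, -, hv⟩ := hG.exists_isClique_inter_neighborSet A G.isClique_empty
    fun h => h ha
  obtain ⟨c, hc⟩ := ih (A.erase v) (erase_ssubset hvA)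
    (fun B hB => hA B (hB.trans (erase_subset _ _))) fun u hu => hL u (mem_of_mem_erase hu)
  set N := {u ∈ A.erase v | G.Adj v u}
  have hN : G.IsClique (insert v N : Finset V) := by
    rw [coe_insert, SimpleGraph.isClique_insert]
    refine ⟨hv.subset fun u hu => ?_, fun u hu _ => (mem_filter.mp hu).2⟩
    exact ⟨mem_of_mem_erase (mem_filter.mp hu).1, (mem_filter.mp hu).2⟩
  have hNt : #N + 1 ≤ t := by
    have := hA _ (insert_subset hvA ((filter_subset _ _).trans (erase_subset _ _))) hN
    rwa [card_insert_of_notMem (by simp)] at this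
  rw [← insert_erase hvA]
  exact hc.exists_insert ((Nat.lt_of_succ_le hNt).trans_le (hL v hvA))

theorem Finset.exists_subset_card_eq_mul_sum_le {ι : Type*} (f : ι → ℕ) (I : Finset ι) {t : ℕ}
    (ht : t ≤ #I) : ∃ T ⊆ I, #T = t ∧ t * ∑ i ∈ I, f i ≤ #I * ∑ i ∈ T, f i := by
  classical
  induction I using Finset.strongInduction with | H I ih =>
  rcases ht.eq_or_lt with rfl | hlt
  · exact ⟨I, subset_rfl, rfl, le_rfl⟩
  obtain ⟨m, hmI, hm⟩ := I.exists_min_image f (card_pos.mp (by omega))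
  obtain ⟨T, hTI, hT, hsum⟩ :=
    ih (I.erase m) (erase_ssubset hmI) (by rw [card_erase_of_mem hmI]; omega)
  have hmT : t * f m ≤ ∑ i ∈ T, f i := by
    simpa [hT] using card_nsmul_le_sum T f (f m) fun i hi => hm i (mem_of_mem_erase (hTI hi))
  refine ⟨T, hTI.trans (erase_subset _ _), hT, ?_⟩
  rw [← add_sum_erase I f hmI, ← card_erase_add_one hmI]
  calc t * (f m + ∑ i ∈ I.erase m, f i) = t * f m + t * ∑ i ∈ I.erase m, f i := mul_add _ _ _
    _ ≤ ∑ i ∈ T, f i + #(I.erase m) * ∑ i ∈ T, f i := add_le_add hmT hsum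
    _ = (#(I.erase m) + 1) * ∑ i ∈ T, f i := by ring

theorem exists_card_mul_le_card_filter_mem {α ι : Type*} [Fintype α] [DecidableEq ι] (c : α → ι)
    (I : Finset ι) (hc : ∀ a, c a ∈ I) {t : ℕ} (ht : t ≤ #I) :
    ∃ T ⊆ I, #T = t ∧ t * Fintype.card α ≤ #I * #{a | c a ∈ T} := by
  obtain ⟨T, hTI, hT, h⟩ := I.exists_subset_card_eq_mul_sum_le (fun i => #{a | c a = i}) ht
  refine ⟨T, hTI, hT, ?_⟩
  have hfibre : ∀ i ∈ T, #{a | c a = i} = #{a ∈ {a | c a ∈ T} | c a = i} := fun i hi => by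
    rw [filter_filter]
    exact congrArg card (filter_congr fun a _ => ⟨fun h => ⟨h ▸ hi, h⟩, And.right⟩)
  rwa [← card_univ, card_eq_sum_card_fiberwise fun a _ => hc a,
    card_eq_sum_card_fiberwise (s := {a | c a ∈ T}) fun a ha => (mem_filter.mp ha).2,
    ← sum_congr rfl hfibre]

theorem choosable_listChromaticNumber {V : Type*} {G : SimpleGraph V}
    (h : listChromaticNumber G ≠ 0) : Choosable G (listChromaticNumber G) :=
  Nat.sInf_mem (Nat.nonempty_of_pos_sInf (Nat.pos_of_ne_zero h))

theorem partial_list_colouring_chordal_general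
    {V : Type*} [Fintype V] (G : SimpleGraph V) (s t : ℕ)
    (hchordal : IsChordal G)
    (hs : listChromaticNumber G = s) (hts : t < s)
    (L : V → Finset ℕ) (hL : ∀ v, (L v).card = t) :
    ∃ S : Finset V,
      (t * Fintype.card V : ℚ) / s ≤ S.card ∧
      ∃ c : V → ℕ, (∀ v ∈ S, c v ∈ L v) ∧
        ∀ u ∈ S, ∀ v ∈ S, G.Adj u v → c u ≠ c v := by
  classical
  obtain ⟨c₀, hc₀, hc₀_adj⟩ : ListColourable G fun _ => range s :=
    hs ▸ choosable_listChromaticNumber (by omega) _ fun _ => hs ▸ card_range _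
  obtain ⟨T, -, hT, hcard⟩ :=
    exists_card_mul_le_card_filter_mem c₀ (range s) hc₀ (by simpa using hts.le)
  refine ⟨({v | c₀ v ∈ T} : Finset V), ?_, hchordal.exists_isListColouringOn _ ?_ L fun v _ => (hL v).ge⟩
  · rw [card_range] at hcard
    rw [div_le_iff₀ (by exact_mod_cast (by omega : 0 < s)), mul_comm _ (s : ℚ)]
    exact_mod_cast hcard
  · intro B hB hBclique
    rw [← hT]
    refine card_le_card_of_injOn c₀ (fun v hv => (mem_filter.mp (hB hv)).2) fun x hx y hy hxy => ?_
    by_contra hne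
    exact hc₀_adj x y (hBclique hx hy hne) hxy

/-- The partial list colouring conjecture for chordal graphs. -/
theorem partial_list_colouring_chordal
    {V : Type*} [Fintype V] (G : SimpleGraph V) (s t : ℕ)
    (hchordal : IsChordal G)
    (hs : listChromaticNumber G = s) (ht : 0 < t) (hts : t < s)
    (L : V → Finset ℕ) (hL : ∀ v, (L v).card = t) :
    ∃ S : Finset V,
      (t * Fintype.card V : ℚ) / s ≤ S.card ∧
      ∃ c : V → ℕ, (∀ v ∈ S, c v ∈ L v) ∧
        ∀ u ∈ S, ∀ v ∈ S, G.Adj u v → c u ≠ c v :=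
  partial_list_colouring_chordal_general G s t hchordal hs hts L hL
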